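/- Let k be an algebraically closed field of characteristic 2, let a_1,a_2,a_3 ∈ k be pairwise distinct, let c_1,c_2,c_3,d_1,d_2,d_3 ∈ k be all nonzero, and let e_i, f_i ∈ k be the unique square roots of d_i and c_i respectively. In k[X_1,X_2,X_3,Y_1,Y_2,Y_3] set Q_1 = X_1Y_1 + X_2Y_2 + X_3Y_3, Q_2 = Σ_{i=1}^{3}(a_iX_iY_i + c_iX_i² + d_iY_i²), Q_3 = Σ_{i=1}^{3} a_i²X_iY_i, and let Σ ⊆ P^5(k) be their common zero locus. Then: (i) each of the following eight projective lines is contained in Σ: Θ_1 = {X_1=X_2=X_3=0, e_1Y_1+e_2Y_2+e_3Y_3=0}, Θ_2 = {Y_1=Y_2=X_3=0, f_1X_1+f_2X_2+e_3Y_3=0}, Θ_3 = {Y_1=X_2=Y_3=0, f_1X_1+e_2Y_2+f_3X_3=0}, Θ_4 = {X_1=Y_2=Y_3=0, e_1Y_1+f_2X_2+f_3X_3=0}, E_1 = {Y_1=Y_2=Y_3=0, f_1X_1+f_2X_2+f_3X_3=0}, E_2 = {X_1=X_2=Y_3=0, e_1Y_1+e_2Y_2+f_3X_3=0}, E_3 =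 {X_1=Y_2=X_3=0, e_1Y_1+f_2X_2+e_3Y_3=0}, E_4 = {Y_1=X_2=X_3=0, f_1X_1+e_2Y_2+e_3Y_3=0}; and (ii) the singular points of Σ — points of Σ represented by nonzero v ∈ k^6 at which the 3×6 Jacobian matrix of (Q_1,Q_2,Q_3) has rank at most 2 — are exactly the twelve intersection points Θ_i ∩ E_j with i ≠ j. -/

import Mathlib

open MvPolynomial

/-- The Grassmannian quadric `Q₁ = X₁Y₁ + X₂Y₂ + X₃Y₃`; coordinates
`(X₁,X₂,X₃,Y₁,Y₂,Y₃) = (X 0, X 1, X 2, X 3, X 4, X 5)`. -/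
noncomputable def Q1p (k : Type*) [Field k] : MvPolynomial (Fin 6) k :=
  X 0 * X 3 + X 1 * X 4 + X 2 * X 5

/-- The quadric `Q₂ = Σ (aᵢ XᵢYᵢ + cᵢ Xᵢ² + dᵢ Yᵢ²)` of the ordinary case. -/
noncomputable def Q2a (k : Type*) [Field k] (a1 a2 a3 c1 c2 c3 d1 d2 d3 : k) :
    MvPolynomial (Fin 6) k :=
  C a1 * (X 0 * X 3) + C a2 * (X 1 * X 4) + C a3 * (X 2 * X 5)
    + C c1 * X 0 ^ 2 + C c2 * X 1 ^ 2 + C c3 * X 2 ^ 2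
    + C d1 * X 3 ^ 2 + C d2 * X 4 ^ 2 + C d3 * X 5 ^ 2

/-- The quadric `Q₃ = Σ aᵢ² XᵢYᵢ` of the ordinary case. -/
noncomputable def Q3a (k : Type*) [Field k] (a1 a2 a3 : k) :
    MvPolynomial (Fin 6) k :=
  C (a1 ^ 2) * (X 0 * X 3) + C (a2 ^ 2) * (X 1 * X 4) + C (a3 ^ 2) * (X 2 * X 5)

/-- The four lines `Θ̃₁, …, Θ̃₄` (affine cones), with `eᵢ = √dᵢ`, `fᵢ = √cᵢ`. -/
def ThetaSet (k : Type*) [Field k] (e1 e2 e3 f1 f2 f3 : k) :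
    Fin 4 → Set (Fin 6 → k) :=
  ![{v | v 0 = 0 ∧ v 1 = 0 ∧ v 2 = 0 ∧ e1 * v 3 + e2 * v 4 + e3 * v 5 = 0},
    {v | v 3 = 0 ∧ v 4 = 0 ∧ v 2 = 0 ∧ f1 * v 0 + f2 * v 1 + e3 * v 5 = 0},
    {v | v 3 = 0 ∧ v 1 = 0 ∧ v 5 = 0 ∧ f1 * v 0 + e2 * v 4 + f3 * v 2 = 0},
    {v | v 0 = 0 ∧ v 4 = 0 ∧ v 5 = 0 ∧ e1 * v 3 + f2 * v 1 + f3 * v 2 = 0}]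

/-- The four lines `E₁, …, E₄` (affine cones), with `eᵢ = √dᵢ`, `fᵢ = √cᵢ`. -/
def ESet (k : Type*) [Field k] (e1 e2 e3 f1 f2 f3 : k) :
    Fin 4 → Set (Fin 6 → k) :=
  ![{v | v 3 = 0 ∧ v 4 = 0 ∧ v 5 = 0 ∧ f1 * v 0 + f2 * v 1 + f3 * v 2 = 0},
    {v | v 0 = 0 ∧ v 1 = 0 ∧ v 5 = 0 ∧ e1 * v 3 + e2 * v 4 + f3 * v 2 = 0},
    {v | v 0 = 0 ∧ v 4 = 0 ∧ v 2 = 0 ∧ e1 * v 3 + f2 * v 1 + e3 * v 5 = 0},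
    {v | v 3 = 0 ∧ v 1 = 0 ∧ v 2 = 0 ∧ f1 * v 0 + e2 * v 4 + e3 * v 5 = 0}]


/-!
In characteristic 2, `Σ cᵢXᵢ² + dᵢYᵢ² = ℓ²` with `ℓ = Σ fᵢXᵢ + eᵢYᵢ`, so `Q₂ = Σ aᵢXᵢYᵢ + ℓ²`,
and `ℓ²` contributes nothing to the Jacobian. Hence the Jacobian is `Vᵀ B`, with `V` the
Vandermonde matrix of the `aᵢ` and `B` the matrix whose `i`-th row carries `(Yᵢ, Xᵢ)` in the
columns of `(Xᵢ, Yᵢ)`; its rank is at most 2 exactly when some pair `(Xᵢ, Yᵢ)` vanishes.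
On `Σ`, one vanishing product `XᵢYᵢ` forces the others to vanish through `Q₁` and `Q₃`
(the `aᵢ²` are distinct), and then `Q₂ = ℓ²` forces `ℓ = 0`. The locus `{XᵢYᵢ = 0, ℓ = 0}` is
the union of the eight lines, and its points with a vanishing pair are the points
`Θᵢ ∩ Eⱼ`, `i ≠ j`.
-/

open scoped Matrix

namespace Matrix

variable {m n R : Type*} [Field R] [Fintype m] [DecidableEq m] [Fintype n]

theorem rank_le_card_sub_one_of_row_eq_zero {M : Matrix m n R} {i : m} (hi : M i = 0) :
    M.rank ≤ Fintype.card m - 1 := by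
  classical
  have hM : M = diagonal (fun j => if j = i then (0 : R) else 1) * M := by
    ext j l
    by_cases hj : j = i <;> simp [hj, hi]
  rw [hM]
  refine (rank_mul_le_left _ _).trans_eq ?_
  simp [rank_diagonal, Fintype.card_subtype_compl]

end Matrix

section EightLines

variable {k : Type*} [Field k]

-- Terms are ordered pair by pair, so that killing one coordinate of each pair leaves exactly
-- the linear equation of the corresponding line in `ThetaSet` or `ESet`.
def rootForm (e1 e2 e3 f1 f2 f3 : k) (v : Fin 6 → k) : k :=
  f1 * v 0 + e1 * v 3 + f2 * v 1 + e2 * v 4 + f3 * v 2 + e3 * v 5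

def eightLines (e1 e2 e3 f1 f2 f3 : k) : Set (Fin 6 → k) :=
  {v | v 0 * v 3 = 0 ∧ v 1 * v 4 = 0 ∧ v 2 * v 5 = 0 ∧ rootForm e1 e2 e3 f1 f2 f3 v = 0}

def HasZeroPair (v : Fin 6 → k) : Prop :=
  (v 0 = 0 ∧ v 3 = 0) ∨ (v 1 = 0 ∧ v 4 = 0) ∨ (v 2 = 0 ∧ v 5 = 0)

def pairMatrix (v : Fin 6 → k) : Matrix (Fin 3) (Fin 6) k :=
  !![v 3, 0, 0, v 0, 0, 0; 0, v 4, 0, 0, v 1, 0; 0, 0, v 5, 0, 0, v 2]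

noncomputable def jacobian (a1 a2 a3 c1 c2 c3 d1 d2 d3 : k) (v : Fin 6 → k) :
    Matrix (Fin 3) (Fin 6) k :=
  Matrix.of fun i j =>
    eval v (pderiv j (![Q1p k, Q2a k a1 a2 a3 c1 c2 c3 d1 d2 d3, Q3a k a1 a2 a3] i))

theorem linearIndependent_row_pairMatrix {v : Fin 6 → k} (hv : ¬HasZeroPair v) :
    LinearIndependent k (pairMatrix v).row := by
  simp only [HasZeroPair, not_or, not_and_or] at hv
  rw [Fintype.linearIndependent_iff]
  intro g hg i
  have hcol := fun j => congrFun hg j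
  simp only [pairMatrix, Fin.sum_univ_three] at hcol
  have h0 := hcol 0; have h1 := hcol 1; have h2 := hcol 2
  have h3 := hcol 3; have h4 := hcol 4; have h5 := hcol 5
  simp at h0 h1 h2 h3 h4 h5
  fin_cases i <;> simp <;> tauto

theorem rank_pairMatrix_le_two_iff {v : Fin 6 → k} :
    (pairMatrix v).rank ≤ 2 ↔ HasZeroPair v := by
  constructor
  · intro h
    by_contra hv
    have := finrank_span_eq_card (linearIndependent_row_pairMatrix hv)
    rw [← Matrix.rank_eq_finrank_span_row, Fintype.card_fin] at this
    omega
  · intro hv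
    obtain ⟨i, hi⟩ : ∃ i, pairMatrix v i = 0 := by
      rcases hv with ⟨ha, hb⟩ | ⟨ha, hb⟩ | ⟨ha, hb⟩ <;> [use 0; use 1; use 2] <;>
        ext j <;> fin_cases j <;> simp [pairMatrix, ha, hb]
    simpa using Matrix.rank_le_card_sub_one_of_row_eq_zero hi

theorem jacobian_eq [CharP k 2] (a1 a2 a3 c1 c2 c3 d1 d2 d3 : k) (v : Fin 6 → k) :
    jacobian a1 a2 a3 c1 c2 c3 d1 d2 d3 v
      = (Matrix.vandermonde ![a1, a2, a3])ᵀ * pairMatrix v := by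
  ext i j
  fin_cases i <;> fin_cases j <;>
    simp [jacobian, Q1p, Q2a, Q3a, pairMatrix, Matrix.vandermonde, Matrix.mul_apply,
      Fin.sum_univ_three, CharTwo.two_eq_zero]

theorem rank_jacobian_le_two_iff [CharP k 2] {a1 a2 a3 : k} (h12 : a1 ≠ a2) (h13 : a1 ≠ a3)
    (h23 : a2 ≠ a3) (c1 c2 c3 d1 d2 d3 : k) (v : Fin 6 → k) :
    (jacobian a1 a2 a3 c1 c2 c3 d1 d2 d3 v).rank ≤ 2 ↔ HasZeroPair v := by
  have hinj : Function.Injective ![a1, a2, a3] := by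
    intro i j hij
    fin_cases i <;> fin_cases j <;> simp_all [h12.symm, h13.symm, h23.symm]
  have hV : IsUnit (Matrix.vandermonde ![a1, a2, a3])ᵀ.det := by
    rw [Matrix.det_transpose]
    exact (Matrix.det_vandermonde_ne_zero_iff.mpr hinj).isUnit
  rw [jacobian_eq, Matrix.rank_mul_eq_right_of_isUnit_det _ _ hV, rank_pairMatrix_le_two_iff]

theorem eq_zero_of_vandermonde_rows {b1 b2 b3 p1 p2 p3 : k} (h12 : b1 ≠ b2) (h13 : b1 ≠ b3)
    (h23 : b2 ≠ b3) (h : p1 + p2 + p3 = 0) (hb : b1 * p1 + b2 * p2 + b3 * p3 = 0)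
    (hp : p1 = 0 ∨ p2 = 0 ∨ p3 = 0) : p1 = 0 ∧ p2 = 0 ∧ p3 = 0 := by
  rcases hp with hp | hp | hp
  · have : (b2 - b3) * p2 = 0 := by linear_combination hb - b3 * h + (b3 - b1) * hp
    have hp2 := (mul_eq_zero.mp this).resolve_left (sub_ne_zero.mpr h23)
    exact ⟨hp, hp2, by linear_combination h - hp - hp2⟩
  · have : (b1 - b3) * p1 = 0 := by linear_combination hb - b3 * h + (b3 - b2) * hp
    have hp1 := (mul_eq_zero.mp this).resolve_left (sub_ne_zero.mpr h13)
    exact ⟨hp1, hp, by linear_combination h - hp - hp1⟩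
  · have : (b1 - b2) * p1 = 0 := by linear_combination hb - b2 * h + (b2 - b3) * hp
    have hp1 := (mul_eq_zero.mp this).resolve_left (sub_ne_zero.mpr h12)
    exact ⟨hp1, by linear_combination h - hp - hp1, hp⟩

@[simp] theorem eval_Q1p (v : Fin 6 → k) :
    eval v (Q1p k) = v 0 * v 3 + v 1 * v 4 + v 2 * v 5 := by
  simp [Q1p]

@[simp] theorem eval_Q3a (a1 a2 a3 : k) (v : Fin 6 → k) :
    eval v (Q3a k a1 a2 a3) =
      a1 ^ 2 * (v 0 * v 3) + a2 ^ 2 * (v 1 * v 4) + a3 ^ 2 * (v 2 * v 5) := by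
  simp [Q3a]

section CharacteristicTwo

variable [CharP k 2] {a1 a2 a3 c1 c2 c3 d1 d2 d3 e1 e2 e3 f1 f2 f3 : k}

theorem eval_Q2a (he1 : e1 ^ 2 = d1) (he2 : e2 ^ 2 = d2) (he3 : e3 ^ 2 = d3)
    (hf1 : f1 ^ 2 = c1) (hf2 : f2 ^ 2 = c2) (hf3 : f3 ^ 2 = c3) (v : Fin 6 → k) :
    eval v (Q2a k a1 a2 a3 c1 c2 c3 d1 d2 d3) = a1 * (v 0 * v 3) + a2 * (v 1 * v 4)
      + a3 * (v 2 * v 5) + rootForm e1 e2 e3 f1 f2 f3 v ^ 2 := by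
  subst he1 he2 he3 hf1 hf2 hf3
  simp only [Q2a, rootForm, eval_add, eval_mul, eval_C, eval_X, eval_pow, CharTwo.add_sq,
    mul_pow]
  ring

theorem mem_sigma_of_mem_eightLines (he1 : e1 ^ 2 = d1) (he2 : e2 ^ 2 = d2)
    (he3 : e3 ^ 2 = d3) (hf1 : f1 ^ 2 = c1) (hf2 : f2 ^ 2 = c2) (hf3 : f3 ^ 2 = c3)
    {v : Fin 6 → k} (hv : v ∈ eightLines e1 e2 e3 f1 f2 f3) :
    eval v (Q1p k) = 0 ∧ eval v (Q2a k a1 a2 a3 c1 c2 c3 d1 d2 d3) = 0 ∧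
      eval v (Q3a k a1 a2 a3) = 0 := by
  obtain ⟨hp1, hp2, hp3, hℓ⟩ := hv
  simp [eval_Q2a he1 he2 he3 hf1 hf2 hf3, hp1, hp2, hp3, hℓ]

theorem mem_sigma_iff_mem_eightLines (h12 : a1 ≠ a2) (h13 : a1 ≠ a3) (h23 : a2 ≠ a3)
    (he1 : e1 ^ 2 = d1) (he2 : e2 ^ 2 = d2) (he3 : e3 ^ 2 = d3)
    (hf1 : f1 ^ 2 = c1) (hf2 : f2 ^ 2 = c2) (hf3 : f3 ^ 2 = c3)
    {v : Fin 6 → k} (hv : HasZeroPair v) :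
    (eval v (Q1p k) = 0 ∧ eval v (Q2a k a1 a2 a3 c1 c2 c3 d1 d2 d3) = 0 ∧
      eval v (Q3a k a1 a2 a3) = 0) ↔ v ∈ eightLines e1 e2 e3 f1 f2 f3 := by
  refine ⟨fun ⟨hq1, hq2, hq3⟩ => ?_, mem_sigma_of_mem_eightLines he1 he2 he3 hf1 hf2 hf3⟩
  have hsq {x y : k} (h : x ≠ y) : x ^ 2 ≠ y ^ 2 := by
    simpa [frobenius_def] using (frobenius_inj k 2).ne h
  rw [eval_Q1p] at hq1
  rw [eval_Q3a] at hq3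
  have hp : v 0 * v 3 = 0 ∨ v 1 * v 4 = 0 ∨ v 2 * v 5 = 0 := by
    rcases hv with ⟨h, -⟩ | ⟨h, -⟩ | ⟨h, -⟩ <;> simp [h]
  obtain ⟨hp1, hp2, hp3⟩ :=
    eq_zero_of_vandermonde_rows (hsq h12) (hsq h13) (hsq h23) hq1 hq3 hp
  rw [eval_Q2a he1 he2 he3 hf1 hf2 hf3, hp1, hp2, hp3] at hq2
  exact ⟨hp1, hp2, hp3, pow_eq_zero_iff two_ne_zero |>.mp (by simpa using hq2)⟩

theorem singular_iff_hasZeroPair_and_mem_eightLines (h12 : a1 ≠ a2) (h13 : a1 ≠ a3)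
    (h23 : a2 ≠ a3) (he1 : e1 ^ 2 = d1) (he2 : e2 ^ 2 = d2) (he3 : e3 ^ 2 = d3)
    (hf1 : f1 ^ 2 = c1) (hf2 : f2 ^ 2 = c2) (hf3 : f3 ^ 2 = c3) (v : Fin 6 → k) :
    (eval v (Q1p k) = 0 ∧ eval v (Q2a k a1 a2 a3 c1 c2 c3 d1 d2 d3) = 0 ∧
      eval v (Q3a k a1 a2 a3) = 0 ∧ (jacobian a1 a2 a3 c1 c2 c3 d1 d2 d3 v).rank ≤ 2) ↔
      HasZeroPair v ∧ v ∈ eightLines e1 e2 e3 f1 f2 f3 := by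
  rw [rank_jacobian_le_two_iff h12 h13 h23, ← and_assoc, ← and_assoc, and_comm, and_assoc]
  exact and_congr_right fun hv =>
    mem_sigma_iff_mem_eightLines h12 h13 h23 he1 he2 he3 hf1 hf2 hf3 hv

end CharacteristicTwo

theorem thetaSet_subset_eightLines (e1 e2 e3 f1 f2 f3 : k) (i : Fin 4) :
    ThetaSet k e1 e2 e3 f1 f2 f3 i ⊆ eightLines e1 e2 e3 f1 f2 f3 := by
  intro v hv
  fin_cases i <;> obtain ⟨h1, h2, h3, h⟩ := hv <;> simp_all [eightLines, rootForm]

theorem eSet_subset_eightLines (e1 e2 e3 f1 f2 f3 : k) (i : Fin 4) :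
    ESet k e1 e2 e3 f1 f2 f3 i ⊆ eightLines e1 e2 e3 f1 f2 f3 := by
  intro v hv
  fin_cases i <;> obtain ⟨h1, h2, h3, h⟩ := hv <;> simp_all [eightLines, rootForm]

theorem exists_mem_thetaSet_inter_eSet_iff (e1 e2 e3 f1 f2 f3 : k) (v : Fin 6 → k) :
    (∃ i j : Fin 4, i ≠ j ∧ v ∈ ThetaSet k e1 e2 e3 f1 f2 f3 i ∧
        v ∈ ESet k e1 e2 e3 f1 f2 f3 j) ↔
      HasZeroPair v ∧ v ∈ eightLines e1 e2 e3 f1 f2 f3 := by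
  constructor
  · rintro ⟨i, j, hij, hT, hE⟩
    refine ⟨?_, thetaSet_subset_eightLines e1 e2 e3 f1 f2 f3 i hT⟩
    fin_cases i <;> fin_cases j <;> simp_all [ThetaSet, ESet, HasZeroPair]
  · rintro ⟨hv, hp1, hp2, hp3, hℓ⟩
    simp only [rootForm] at hℓ
    rcases hv with ⟨h0, h3⟩ | ⟨h1, h4⟩ | ⟨h2, h5⟩
    · rcases mul_eq_zero.mp hp2 with h1 | h4 <;> rcases mul_eq_zero.mp hp3 with h2 | h5
      · exact ⟨0, 3, by decide, by simp_all [ThetaSet], by simp_all [ESet]⟩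
      · exact ⟨2, 1, by decide, by simp_all [ThetaSet], by simp_all [ESet]⟩
      · exact ⟨1, 2, by decide, by simp_all [ThetaSet], by simp_all [ESet]⟩
      · exact ⟨3, 0, by decide, by simp_all [ThetaSet], by simp_all [ESet]⟩
    · rcases mul_eq_zero.mp hp1 with h0 | h3 <;> rcases mul_eq_zero.mp hp3 with h2 | h5
      · exact ⟨0, 2, by decide, by simp_all [ThetaSet], by simp_all [ESet]⟩
      · exact ⟨3, 1, by decide, by simp_all [ThetaSet], by simp_all [ESet]⟩
      · exact ⟨1, 3, by decide, by simp_all [ThetaSet], by simp_all [ESet]⟩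
      · exact ⟨2, 0, by decide, by simp_all [ThetaSet], by simp_all [ESet]⟩
    · rcases mul_eq_zero.mp hp1 with h0 | h3 <;> rcases mul_eq_zero.mp hp2 with h1 | h4
      · exact ⟨0, 1, by decide, by simp_all [ThetaSet], by simp_all [ESet]⟩
      · exact ⟨3, 2, by decide, by simp_all [ThetaSet], by simp_all [ESet]⟩
      · exact ⟨2, 3, by decide, by simp_all [ThetaSet], by simp_all [ESet]⟩
      · exact ⟨1, 0, by decide, by simp_all [ThetaSet], by simp_all [ESet]⟩

end EightLines

theorem stmt_13_general (k : Type*) [Field k] [CharP k 2]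
    (a1 a2 a3 c1 c2 c3 d1 d2 d3 : k)
    (h12 : a1 ≠ a2) (h13 : a1 ≠ a3) (h23 : a2 ≠ a3)
    (e1 e2 e3 f1 f2 f3 : k)
    (he1 : e1 ^ 2 = d1) (he2 : e2 ^ 2 = d2) (he3 : e3 ^ 2 = d3)
    (hf1 : f1 ^ 2 = c1) (hf2 : f2 ^ 2 = c2) (hf3 : f3 ^ 2 = c3) :
    (∀ i : Fin 4, ∀ v ∈ ThetaSet k e1 e2 e3 f1 f2 f3 i,
      eval v (Q1p k) = 0 ∧ eval v (Q2a k a1 a2 a3 c1 c2 c3 d1 d2 d3) = 0 ∧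
      eval v (Q3a k a1 a2 a3) = 0) ∧
    (∀ i : Fin 4, ∀ v ∈ ESet k e1 e2 e3 f1 f2 f3 i,
      eval v (Q1p k) = 0 ∧ eval v (Q2a k a1 a2 a3 c1 c2 c3 d1 d2 d3) = 0 ∧
      eval v (Q3a k a1 a2 a3) = 0) ∧
    (∀ v : Fin 6 → k, v ≠ 0 →
      ((eval v (Q1p k) = 0 ∧ eval v (Q2a k a1 a2 a3 c1 c2 c3 d1 d2 d3) = 0 ∧
          eval v (Q3a k a1 a2 a3) = 0 ∧
          (Matrix.of fun (i : Fin 3) (j : Fin 6) =>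
            eval v (pderiv j
              (![Q1p k, Q2a k a1 a2 a3 c1 c2 c3 d1 d2 d3, Q3a k a1 a2 a3] i))).rank ≤ 2)
        ↔ ∃ i j : Fin 4, i ≠ j ∧ v ∈ ThetaSet k e1 e2 e3 f1 f2 f3 i ∧
            v ∈ ESet k e1 e2 e3 f1 f2 f3 j)) :=
  ⟨fun i _ hv => mem_sigma_of_mem_eightLines he1 he2 he3 hf1 hf2 hf3
      (thetaSet_subset_eightLines e1 e2 e3 f1 f2 f3 i hv),
    fun i _ hv => mem_sigma_of_mem_eightLines he1 he2 he3 hf1 hf2 hf3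
      (eSet_subset_eightLines e1 e2 e3 f1 f2 f3 i hv),
    fun v _ => (singular_iff_hasZeroPair_and_mem_eightLines h12 h13 h23 he1 he2 he3 hf1 hf2 hf3
      v).trans (exists_mem_thetaSet_inter_eSet_iff e1 e2 e3 f1 f2 f3 v).symm⟩

/-- the eight lines on the intersection `Σ` of three quadrics in
the ordinary case, and the characterization of its twelve singular points as the
intersection points `Θ̃ᵢ ∩ Eⱼ`, `i ≠ j`. -/
theorem stmt_13 (k : Type*) [Field k] [IsAlgClosed k] [CharP k 2]
    (a1 a2 a3 c1 c2 c3 d1 d2 d3 : k)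
    (h12 : a1 ≠ a2) (h13 : a1 ≠ a3) (h23 : a2 ≠ a3)
    (hc1 : c1 ≠ 0) (hc2 : c2 ≠ 0) (hc3 : c3 ≠ 0)
    (hd1 : d1 ≠ 0) (hd2 : d2 ≠ 0) (hd3 : d3 ≠ 0)
    (e1 e2 e3 f1 f2 f3 : k)
    (he1 : e1 ^ 2 = d1) (he2 : e2 ^ 2 = d2) (he3 : e3 ^ 2 = d3)
    (hf1 : f1 ^ 2 = c1) (hf2 : f2 ^ 2 = c2) (hf3 : f3 ^ 2 = c3) :
    (∀ i : Fin 4, ∀ v ∈ ThetaSet k e1 e2 e3 f1 f2 f3 i,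
      eval v (Q1p k) = 0 ∧ eval v (Q2a k a1 a2 a3 c1 c2 c3 d1 d2 d3) = 0 ∧
      eval v (Q3a k a1 a2 a3) = 0) ∧
    (∀ i : Fin 4, ∀ v ∈ ESet k e1 e2 e3 f1 f2 f3 i,
      eval v (Q1p k) = 0 ∧ eval v (Q2a k a1 a2 a3 c1 c2 c3 d1 d2 d3) = 0 ∧
      eval v (Q3a k a1 a2 a3) = 0) ∧
    (∀ v : Fin 6 → k, v ≠ 0 →
      ((eval v (Q1p k) = 0 ∧ eval v (Q2a k a1 a2 a3 c1 c2 c3 d1 d2 d3) = 0 ∧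
          eval v (Q3a k a1 a2 a3) = 0 ∧
          (Matrix.of fun (i : Fin 3) (j : Fin 6) =>
            eval v (pderiv j
              (![Q1p k, Q2a k a1 a2 a3 c1 c2 c3 d1 d2 d3, Q3a k a1 a2 a3] i))).rank ≤ 2)
        ↔ ∃ i j : Fin 4, i ≠ j ∧ v ∈ ThetaSet k e1 e2 e3 f1 f2 f3 i ∧
            v ∈ ESet k e1 e2 e3 f1 f2 f3 j)) :=
  stmt_13_general k a1 a2 a3 c1 c2 c3 d1 d2 d3 h12 h13 h23 e1 e2 e3 f1 f2 f3 he1 he2 he3 hf1 hf2 hf3
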